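/- Let n ≥ 1 and let L_ideal, L_star be n×n complex matrices, with L_ideal = V D V⁻¹ for an invertible matrix V and diagonal matrix D, and suppose every eigenvalue λ of L_ideal satisfies |Im(λ)| ≤ π. If ‖L_star − L_ideal‖_F < 2π / κ(V), then every eigenvalue μ of L_star satisfies |Im(μ)| < 3π. In particular, when searching over branches of the matrix logarithm for a Lindbladian near L_ideal, it suffices to consider branch shifts m_j ∈ {−1, 0, 1} of the principal logarithm eigenvalues. -/

import Mathlib

/-!
Bauer–Fike argument. Conjugating by `V` turns `L_star` into `D + E` with
`‖E‖_F ≤ κ(V) ‖L_star − L_ideal‖_F < 2π`. If `|Im μ| ≥ 3π`, then `|μ − D i i| ≥ 2π` for every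
diagonal entry, since these are eigenvalues of `L_ideal`. Hence `μ − D` is invertible with
`‖(μ − D)⁻¹ E‖_F < 1`, and `μ − D − E = (μ − D)(1 − (μ − D)⁻¹ E)` is invertible by the Neumann
series, so `μ` is not an eigenvalue of `L_star`.
-/
open scoped Matrix

/-- The Frobenius norm of a complex matrix: `‖M‖_F = sqrt (∑ j k, |M j k|²)`. -/
noncomputable def frobNorm {m n : Type*} [Fintype m] [Fintype n] (M : Matrix m n ℂ) : ℝ :=
  Real.sqrt (∑ j, ∑ k, ‖M j k‖ ^ 2)

section Frobenius

open Matrix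

attribute [local instance] Matrix.frobeniusNormedAddCommGroup Matrix.frobeniusNormedRing
  Matrix.frobeniusNormedSpace

variable {ι : Type*} [Fintype ι]

theorem frobNorm_eq_norm {m n : Type*} [Fintype m] [Fintype n] (M : Matrix m n ℂ) :
    frobNorm M = ‖M‖ := by
  simp [frobNorm, frobenius_norm_def, Real.sqrt_eq_rpow]

theorem frobNorm_nonneg {m n : Type*} [Fintype m] [Fintype n] (M : Matrix m n ℂ) :
    0 ≤ frobNorm M :=
  Real.sqrt_nonneg _

theorem frobNorm_mono {m n : Type*} [Fintype m] [Fintype n] {A B : Matrix m n ℂ}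
    (h : ∀ i j, ‖A i j‖ ≤ ‖B i j‖) : frobNorm A ≤ frobNorm B :=
  Real.sqrt_le_sqrt <| Finset.sum_le_sum fun i _ => Finset.sum_le_sum fun j _ =>
    pow_le_pow_left₀ (norm_nonneg _) (h i j) 2

theorem frobNorm_diagonal_mul_le [DecidableEq ι] {w : ι → ℂ} {c : ℝ} (hc : 0 ≤ c)
    (hw : ∀ i, ‖w i‖ ≤ c) (M : Matrix ι ι ℂ) :
    frobNorm (diagonal w * M) ≤ c * frobNorm M := by
  calc frobNorm (diagonal w * M) ≤ frobNorm ((c : ℂ) • M) := frobNorm_mono fun i j => by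
        simpa [diagonal_mul, abs_of_nonneg hc] using
          mul_le_mul_of_nonneg_right (hw i) (norm_nonneg (M i j))
    _ = c * frobNorm M := by
      rw [frobNorm_eq_norm, frobNorm_eq_norm, norm_smul, Complex.norm_real, Real.norm_of_nonneg hc]

theorem frobNorm_mul_mul_le {A B C : Matrix ι ι ℂ} :
    frobNorm (A * B * C) ≤ frobNorm A * frobNorm B * frobNorm C := by
  simp only [frobNorm_eq_norm]
  exact (frobenius_norm_mul _ _).trans
    (mul_le_mul_of_nonneg_right (frobenius_norm_mul _ _) (norm_nonneg _))

theorem notMem_spectrum_diagonal_add_of_frobNorm_lt [DecidableEq ι] {d : ι → ℂ}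
    {B : Matrix ι ι ℂ} {r : ℝ} (hB : frobNorm B < r) {μ : ℂ} (hμ : ∀ i, r ≤ ‖μ - d i‖) :
    μ ∉ spectrum ℂ (diagonal d + B) := by
  have hr : 0 < r := (frobNorm_nonneg B).trans_lt hB
  have hne : ∀ i, μ - d i ≠ 0 := fun i h => by simpa [h] using hr.trans_le (hμ i)
  set w : ι → ℂ := fun i => (μ - d i)⁻¹
  have hsmall : ‖diagonal w * B‖ < 1 := by
    rw [← frobNorm_eq_norm]
    calc frobNorm (diagonal w * B) ≤ r⁻¹ * frobNorm B :=
          frobNorm_diagonal_mul_le (inv_nonneg.2 hr.le)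
            (fun i => by simpa [w] using inv_anti₀ hr (hμ i)) B
      _ < r⁻¹ * r := mul_lt_mul_of_pos_left hB (inv_pos.2 hr)
      _ = 1 := inv_mul_cancel₀ hr.ne'
  have hunit : IsUnit (diagonal fun i => μ - d i) :=
    isUnit_diagonal.2 (Pi.isUnit_iff.2 fun i => (hne i).isUnit)
  have hfactor : algebraMap ℂ _ μ - (diagonal d + B)
      = diagonal (fun i => μ - d i) * (1 - diagonal w * B) := by
    rw [mul_sub, mul_one, ← mul_assoc, diagonal_mul_diagonal,
      show (fun i => (μ - d i) * w i) = fun _ => 1 from funext fun i => mul_inv_cancel₀ (hne i),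
      diagonal_one, one_mul, algebraMap_eq_diagonal, ← sub_sub, ← diagonal_sub]
    rfl
  -- completeness for the Frobenius uniformity; instance search alone finds only the product one
  have := FiniteDimensional.complete ℂ (Matrix ι ι ℂ)
  rw [spectrum.mem_iff, not_not, hfactor]
  exact hunit.mul (isUnit_one_sub_of_norm_lt_one hsmall)

theorem notMem_spectrum_of_frobNorm_conj_sub_lt [DecidableEq ι] {L V D : Matrix ι ι ℂ}
    (hV : IsUnit V) (hD : D.IsDiag) {r : ℝ} (hE : frobNorm (V⁻¹ * (L - V * D * V⁻¹) * V) < r)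
    {μ : ℂ} (hμ : ∀ i, r ≤ ‖μ - D i i‖) : μ ∉ spectrum ℂ L := by
  have hVinv : V⁻¹ * V = 1 := nonsing_inv_mul V ((isUnit_iff_isUnit_det V).1 hV)
  have hDconj : V⁻¹ * (V * D * V⁻¹) * V = D := by
    rw [← mul_assoc, ← mul_assoc, hVinv, one_mul, mul_assoc, hVinv, mul_one]
  have hconj : V⁻¹ * L * V = diagonal D.diag + V⁻¹ * (L - V * D * V⁻¹) * V := by
    rw [hD.diagonal_diag, mul_sub, sub_mul, hDconj, add_sub_cancel]
  have hspec : spectrum ℂ L = spectrum ℂ (V⁻¹ * L * V) := by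
    simpa [coe_units_inv] using (spectrum.units_conjugate (a := L) (u := hV.unit⁻¹)).symm
  rw [hspec, hconj]
  exact notMem_spectrum_diagonal_add_of_frobNorm_lt hE hμ

end Frobenius

theorem Matrix.IsDiag.diag_mem_spectrum_conj {K ι : Type*} [Field K] [Fintype ι] [DecidableEq ι]
    {V D : Matrix ι ι K} (hV : IsUnit V) (hD : D.IsDiag) (i : ι) :
    D i i ∈ spectrum K (V * D * V⁻¹) := by
  rw [← hV.unit_spec, ← Matrix.coe_units_inv, spectrum.units_conjugate, ← hD.diagonal_diag,
    spectrum_diagonal]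
  exact ⟨i, (diagonal_apply_eq _ i).symm⟩

theorem stmt18_general (n : ℕ) (Lideal Lstar V D : Matrix (Fin n) (Fin n) ℂ)
    (hV : IsUnit V) (hD : D.IsDiag) (hdiag : Lideal = V * D * V⁻¹)
    (hpb : ∀ lam ∈ spectrum ℂ Lideal, |lam.im| ≤ Real.pi)
    (hclose : frobNorm (Lstar - Lideal) < 2 * Real.pi / (frobNorm V * frobNorm V⁻¹)) :
    ∀ μ ∈ spectrum ℂ Lstar, |μ.im| < 3 * Real.pi := by
  intro μ hμ
  by_contra! hμ_im
  -- `2π / 0 = 0`, so `hclose` itself rules out `κ(V) = 0`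
  have hκ : 0 < frobNorm V * frobNorm V⁻¹ :=
    (div_pos_iff_of_pos_left Real.two_pi_pos).1 ((frobNorm_nonneg _).trans_lt hclose)
  have hE : frobNorm (V⁻¹ * (Lstar - Lideal) * V) < 2 * Real.pi :=
    calc frobNorm (V⁻¹ * (Lstar - Lideal) * V)
        ≤ frobNorm V⁻¹ * frobNorm (Lstar - Lideal) * frobNorm V := frobNorm_mul_mul_le
      _ = frobNorm (Lstar - Lideal) * (frobNorm V * frobNorm V⁻¹) := by ring
      _ < 2 * Real.pi := (lt_div_iff₀ hκ).1 hclose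
  have hsep (i : Fin n) : 2 * Real.pi ≤ ‖μ - D i i‖ := by
    have hD_im := hpb _ (hdiag ▸ hD.diag_mem_spectrum_conj hV i)
    calc 2 * Real.pi ≤ |μ.im| - |(D i i).im| := by linarith
      _ ≤ |(μ - D i i).im| := by rw [Complex.sub_im]; exact abs_sub_abs_le_abs_sub _ _
      _ ≤ ‖μ - D i i‖ := Complex.abs_im_le_norm _
  exact notMem_spectrum_of_frobNorm_conj_sub_lt hV hD (hdiag ▸ hE) hsep hμ

/-- If `L_ideal = V D V⁻¹` with every eigenvalue `λ` of `L_ideal` satisfying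
`|Im λ| ≤ π`, and `‖L_star − L_ideal‖_F < 2π / κ(V)`, then every eigenvalue `μ` of `L_star`
satisfies `|Im μ| < 3π`. -/
theorem stmt18 (n : ℕ) (hn : 1 ≤ n) (Lideal Lstar V D : Matrix (Fin n) (Fin n) ℂ)
    (hV : IsUnit V) (hD : D.IsDiag) (hdiag : Lideal = V * D * V⁻¹)
    (hpb : ∀ lam ∈ spectrum ℂ Lideal, |lam.im| ≤ Real.pi)
    (hclose : frobNorm (Lstar - Lideal) < 2 * Real.pi / (frobNorm V * frobNorm V⁻¹)) :
    ∀ μ ∈ spectrum ℂ Lstar, |μ.im| < 3 * Real.pi :=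
  stmt18_general n Lideal Lstar V D hV hD hdiag hpb hclose
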